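/- Let p and q be coprime integers with p > q > 1 and p > 2q−1. Then the Hausdorff dimension of the topological closure in ℝ of the span-set Span = {span(n) : n ∈ ℕ} is at most (log 2)/(log p − log q). -/

import Mathlib

/-- `w` labels a branch of the base-p/q automaton with digit set `E` from state `n`:
there are states `s 0 = n, s 1, s 2, …` with `q·s(k+1) = p·s k + w k` and `w k ∈ E`. -/
def IsBranch (p q : ℕ) (E : Set ℤ) (n : ℕ) (w : ℕ → ℤ) : Prop :=
  ∃ s : ℕ → ℕ, s 0 = n ∧ ∀ k : ℕ, (q : ℤ) * s (k + 1) = p * s k + w k ∧ w k ∈ E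

/-- `u` (a word of length `ℓ`) labels a path from `n` to `m` in the base-p/q automaton
with digit set `E`. -/
def IsPath (p q : ℕ) (E : Set ℤ) (n m ℓ : ℕ) (u : ℕ → ℤ) : Prop :=
  ∃ s : ℕ → ℕ, s 0 = n ∧ s ℓ = m ∧
    ∀ k < ℓ, (q : ℤ) * s (k + 1) = p * s k + u k ∧ u k ∈ E

/-- The canonical digit alphabet `A_p = {0, 1, …, p−1}`. -/
def Ap (p : ℕ) : Set ℤ := Set.Icc 0 ((p : ℤ) - 1)

/-- The lower alphabet `{0, 1, …, q−1}`. -/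
def LowAlph (q : ℕ) : Set ℤ := Set.Icc 0 ((q : ℤ) - 1)

/-- The upper alphabet `{p−q, …, p−1}`. -/
def UpAlph (p q : ℕ) : Set ℤ := Set.Icc ((p : ℤ) - q) ((p : ℤ) - 1)

/-- The alphabet `D = {p−2q+1, …, p−1}` of the automaton `S_{p/q}`. -/
def Dalph (p q : ℕ) : Set ℤ := Set.Icc ((p : ℤ) - 2 * q + 1) ((p : ℤ) - 1)

/-- Evaluation after the radix point: `ρ(w) = Σ_{i≥1} (w_i/q)·(q/p)^i`
(here `w k` is the `(k+1)`-st digit). -/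
noncomputable def rho (p q : ℕ) (w : ℕ → ℤ) : ℝ :=
  ∑' i : ℕ, ((w i : ℝ) / q) * ((q : ℝ) / p) ^ (i + 1)

/-!
The difference of the two branches from `n` is a branch from `0`, with possibly negative states,
whose digits lie in `D = {p-2q+1, …, p-1}`. The digits admissible from a state form a residue class
mod `q`, of which `D` contains at most two members, so every span is `ρ` of the digit word of a
walk driven by a Boolean sequence. Walks sharing their first `ℓ` choices share their first `ℓ`
digits, so their values lie in one interval of length `O((q/p)^ℓ)`. Covering the closure of the
spans by these `2^ℓ` intervals bounds its Hausdorff dimension by `log 2 / log (p/q)`.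
-/

open Set Filter Topology MeasureTheory

theorem dimH_le_of_binary_covers {X : Type*} [EMetricSpace X] {s : Set X} {r C : ℝ}
    (hr₀ : 0 < r) (hr₁ : r < 1) (hC : 0 ≤ C) (U : ∀ ℓ : ℕ, (Fin ℓ → Bool) → Set X)
    (hdiam : ∀ ℓ β, Metric.ediam (U ℓ β) ≤ ENNReal.ofReal (C * r ^ ℓ))
    (hcover : ∀ ℓ, s ⊆ ⋃ β, U ℓ β) :
    dimH s ≤ ENNReal.ofReal (Real.log 2 / -Real.log r) := by
  borelize X
  set d := Real.log 2 / -Real.log r with hd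
  have hlog : 0 < -Real.log r := neg_pos.mpr (Real.log_neg hr₀ hr₁)
  have hd₀ : 0 ≤ d := div_nonneg (Real.log_nonneg one_le_two) hlog.le
  -- the choice of `d`: `2 ^ ℓ` sets of diameter `r ^ ℓ` have total `d`-dimensional mass `1`
  have hrd : r ^ d = 2⁻¹ := by
    have hlog' : Real.log r * d = -Real.log 2 := by rw [hd]; field_simp [(neg_pos.mp hlog).ne]
    rw [Real.rpow_def_of_pos hr₀, hlog', Real.exp_neg, Real.exp_log two_pos]
  have hsum : ∀ ℓ : ℕ,
      ∑ β : Fin ℓ → Bool, Metric.ediam (U ℓ β) ^ d ≤ ENNReal.ofReal (C ^ d) := by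
    intro ℓ
    have hterm : ENNReal.ofReal (C * r ^ ℓ) ^ d = ENNReal.ofReal (C ^ d * (2 ^ ℓ)⁻¹) := by
      rw [ENNReal.ofReal_rpow_of_nonneg (by positivity) hd₀, Real.mul_rpow hC (by positivity),
        ← Real.rpow_natCast, ← Real.rpow_mul hr₀.le, mul_comm (ℓ : ℝ), Real.rpow_mul hr₀.le,
        hrd, Real.rpow_natCast, inv_pow]
    calc ∑ β : Fin ℓ → Bool, Metric.ediam (U ℓ β) ^ d
        ≤ ∑ _β : Fin ℓ → Bool, ENNReal.ofReal (C ^ d * (2 ^ ℓ)⁻¹) := by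
          gcongr with β
          exact hterm ▸ ENNReal.rpow_le_rpow (hdiam ℓ β) hd₀
      _ = ENNReal.ofReal (C ^ d) := by
          rw [← ENNReal.ofReal_sum_of_nonneg fun _ _ => by positivity, Finset.sum_const,
            Finset.card_univ, Fintype.card_fun, Fintype.card_bool, Fintype.card_fin, nsmul_eq_mul]
          congr 1
          push_cast
          field_simp
  have hμ : μH[d] s ≤ ENNReal.ofReal (C ^ d) := by
    have hsize : Tendsto (fun ℓ : ℕ => ENNReal.ofReal (C * r ^ ℓ)) atTop (𝓝 0) := by
      rw [← ENNReal.ofReal_zero, ← mul_zero C]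
      exact ENNReal.tendsto_ofReal
        ((tendsto_pow_atTop_nhds_zero_of_lt_one hr₀.le hr₁).const_mul C)
    calc μH[d] s ≤ liminf (fun ℓ => ∑ β, Metric.ediam (U ℓ β) ^ d) atTop :=
          Measure.hausdorffMeasure_le_liminf_sum d s _ hsize U
            (Eventually.of_forall hdiam) (Eventually.of_forall hcover)
      _ ≤ ENNReal.ofReal (C ^ d) :=
          (liminf_le_liminf (Eventually.of_forall hsum)).trans (liminf_const _).le
  exact dimH_le_of_hausdorffMeasure_ne_top (d := d.toNNReal)
    (by rw [Real.coe_toNNReal _ hd₀]; exact ne_top_of_le_ne_top ENNReal.ofReal_ne_top hμ)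

section

variable {p q : ℕ}

noncomputable def rhoPartial (p q : ℕ) (w : ℕ → ℤ) (ℓ : ℕ) : ℝ :=
  ∑ i ∈ Finset.range ℓ, ((w i : ℝ) / q) * ((q : ℝ) / p) ^ (i + 1)

theorem hasSum_rho_majorant (hq : 0 < q) (hpq : q < p) (M : ℝ) :
    HasSum (fun i : ℕ => M / q * ((q : ℝ) / p) ^ (i + 1)) (M / (p - q)) := by
  have hq' : (0 : ℝ) < q := by exact_mod_cast hq
  have hqp : (q : ℝ) < p := by exact_mod_cast hpq
  have hp : (0 : ℝ) < p := hq'.trans hqp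
  have hr₁ : (q : ℝ) / p < 1 := (div_lt_one hp).mpr hqp
  have hvalue : M / q * (q / p) * (1 - (q : ℝ) / p)⁻¹ = M / (p - q) := by
    have : (0 : ℝ) < p - q := by linarith
    field_simp
  have h := (hasSum_geometric_of_lt_one (by positivity) hr₁).mul_left (M / q * (q / p))
  rw [hvalue] at h
  simpa only [mul_assoc, ← pow_succ'] using h

theorem norm_rho_term_le {w : ℕ → ℤ} {M : ℝ}
    (hw : ∀ i, |(w i : ℝ)| ≤ M) (i : ℕ) :
    ‖((w i : ℝ) / q) * ((q : ℝ) / p) ^ (i + 1)‖ ≤ M / q * ((q : ℝ) / p) ^ (i + 1) := by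
  have hr₀ : (0 : ℝ) ≤ q / p := by positivity
  rw [norm_mul, norm_div, norm_pow, Real.norm_natCast, Real.norm_of_nonneg hr₀, Real.norm_eq_abs]
  gcongr
  exact hw i

theorem summable_rho_of_abs_le (hq : 0 < q) (hpq : q < p) {w : ℕ → ℤ} {M : ℝ}
    (hw : ∀ i, |(w i : ℝ)| ≤ M) :
    Summable fun i => ((w i : ℝ) / q) * ((q : ℝ) / p) ^ (i + 1) :=
  .of_norm_bounded (hasSum_rho_majorant hq hpq M).summable (norm_rho_term_le hw)

theorem abs_rho_le (hq : 0 < q) (hpq : q < p) {w : ℕ → ℤ} {M : ℝ}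
    (hw : ∀ i, |(w i : ℝ)| ≤ M) : |rho p q w| ≤ M / (p - q) :=
  tsum_of_norm_bounded (hasSum_rho_majorant hq hpq M) (norm_rho_term_le hw)

theorem rho_eq_rhoPartial_add (w : ℕ → ℤ)
    (hw : Summable fun i => ((w i : ℝ) / q) * ((q : ℝ) / p) ^ (i + 1)) (ℓ : ℕ) :
    rho p q w = rhoPartial p q w ℓ + ((q : ℝ) / p) ^ ℓ * rho p q (fun i => w (i + ℓ)) := by
  rw [rho, rho, rhoPartial, ← hw.sum_add_tsum_nat_add ℓ, ← tsum_mul_left]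
  congr 1
  refine tsum_congr fun i => ?_
  ring

theorem rho_sub {w w' : ℕ → ℤ}
    (hw : Summable fun i => ((w i : ℝ) / q) * ((q : ℝ) / p) ^ (i + 1))
    (hw' : Summable fun i => ((w' i : ℝ) / q) * ((q : ℝ) / p) ^ (i + 1)) :
    rho p q (fun i => w i - w' i) = rho p q w - rho p q w' := by
  rw [rho, rho, rho, ← hw.tsum_sub hw']
  refine tsum_congr fun i => ?_
  push_cast
  ring

theorem rho_mem_Icc_rhoPartial (hq : 0 < q) (hpq : q < p) {w : ℕ → ℤ} {M : ℝ}
    (hw : ∀ i, |(w i : ℝ)| ≤ M) (ℓ : ℕ) :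
    rho p q w ∈ Icc (rhoPartial p q w ℓ - ((q : ℝ) / p) ^ ℓ * (M / (p - q)))
      (rhoPartial p q w ℓ + ((q : ℝ) / p) ^ ℓ * (M / (p - q))) := by
  have htail := abs_rho_le hq hpq (w := fun i => w (i + ℓ)) fun i => hw (i + ℓ)
  have hr : (0 : ℝ) ≤ ((q : ℝ) / p) ^ ℓ := by positivity
  rw [rho_eq_rhoPartial_add w (summable_rho_of_abs_le hq hpq hw) ℓ, mem_Icc]
  constructor <;> nlinarith [abs_le.mp htail]

def baseDigit (p q : ℕ) (t : ℤ) : ℤ :=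
  ((p : ℤ) - q) - (((p : ℤ) * t + ((p : ℤ) - q)) % q)

def choiceDigit (p q : ℕ) (t : ℤ) (c : Bool) : ℤ :=
  baseDigit p q t + if c then (q : ℤ) else 0

def walkState (p q : ℕ) (b : ℕ → Bool) : ℕ → ℤ
  | 0 => 0
  | k + 1 => ((p : ℤ) * walkState p q b k + choiceDigit p q (walkState p q b k) (b k)) / q

def walkDigit (p q : ℕ) (b : ℕ → Bool) (k : ℕ) : ℤ :=
  choiceDigit p q (walkState p q b k) (b k)

theorem dvd_mul_add_baseDigit (t : ℤ) : (q : ℤ) ∣ p * t + baseDigit p q t :=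
  ⟨((p : ℤ) * t + ((p : ℤ) - q)) / q, by
    rw [baseDigit]; linarith [Int.mul_ediv_add_emod ((p : ℤ) * t + ((p : ℤ) - q)) q]⟩

theorem baseDigit_mem_Icc (hq : 0 < q) (t : ℤ) :
    baseDigit p q t ∈ Icc ((p : ℤ) - 2 * q + 1) ((p : ℤ) - q) := by
  have hq' : (0 : ℤ) < q := by exact_mod_cast hq
  have h₀ := Int.emod_nonneg ((p : ℤ) * t + ((p : ℤ) - q)) hq'.ne'
  have h₁ := Int.emod_lt_of_pos ((p : ℤ) * t + ((p : ℤ) - q)) hq'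
  rw [baseDigit, mem_Icc]
  constructor <;> linarith

theorem choiceDigit_mem_Icc (hq : 0 < q) (t : ℤ) (c : Bool) :
    choiceDigit p q t c ∈ Icc ((p : ℤ) - 2 * q + 1) p := by
  obtain ⟨h₀, h₁⟩ := baseDigit_mem_Icc hq t (p := p)
  rw [choiceDigit, mem_Icc]
  split <;> constructor <;> linarith

-- The admissible digits form a residue class mod `q`, and `D` spans fewer than `2q` integers.
theorem exists_choiceDigit_eq (hq : 0 < q) {t d : ℤ} (hd : d ∈ Dalph p q)
    (hdvd : (q : ℤ) ∣ p * t + d) : ∃ c, choiceDigit p q t c = d := by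
  obtain ⟨h₀, h₁⟩ := baseDigit_mem_Icc hq t (p := p)
  obtain ⟨hd₀, hd₁⟩ := hd
  have hq' : (0 : ℤ) < q := by exact_mod_cast hq
  obtain ⟨k, hk⟩ := dvd_sub hdvd (dvd_mul_add_baseDigit t (p := p))
  have hk₀ : 0 ≤ k := by nlinarith
  have hk₁ : k ≤ 1 := by nlinarith
  interval_cases k
  · exact ⟨false, by rw [choiceDigit]; simp only [Bool.false_eq_true, if_false]; linarith⟩
  · exact ⟨true, by rw [choiceDigit]; simp only [if_true]; linarith⟩

theorem walkState_congr {b b' : ℕ → Bool} {k : ℕ} (h : ∀ j < k, b j = b' j) :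
    walkState p q b k = walkState p q b' k := by
  induction k with
  | zero => rfl
  | succ k ih =>
    simp only [walkState, ih fun j hj => h j (Nat.lt_succ_of_lt hj), h k (Nat.lt_succ_self k)]

theorem walkDigit_congr {b b' : ℕ → Bool} {k : ℕ} (h : ∀ j ≤ k, b j = b' j) :
    walkDigit p q b k = walkDigit p q b' k := by
  rw [walkDigit, walkDigit, walkState_congr fun j hj => h j hj.le, h k le_rfl]

theorem exists_walkDigit_eq (hq : 0 < q) {t d : ℕ → ℤ} (h₀ : t 0 = 0)
    (hstep : ∀ k, (q : ℤ) * t (k + 1) = p * t k + d k) (hd : ∀ k, d k ∈ Dalph p q) :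
    ∃ b, walkDigit p q b = d := by
  choose b hb using fun k => exists_choiceDigit_eq hq (hd k) ⟨t (k + 1), (hstep k).symm⟩
  have hstate : ∀ k, walkState p q b k = t k := by
    intro k
    induction k with
    | zero => exact h₀.symm
    | succ k ih =>
      rw [walkState, ih, hb, ← hstep, Int.mul_ediv_cancel_left _ (by exact_mod_cast hq.ne')]
  exact ⟨b, funext fun k => by rw [walkDigit, hstate, hb]⟩

theorem abs_walkDigit_le (hq : 0 < q) (hpq : q < p) (b : ℕ → Bool) (k : ℕ) :
    |(walkDigit p q b k : ℝ)| ≤ p := by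
  obtain ⟨h₀, h₁⟩ := choiceDigit_mem_Icc hq (walkState p q b k) (b k) (p := p)
  rw [← Int.cast_natCast, ← Int.cast_abs, Int.cast_le, abs_le, walkDigit]
  constructor <;> omega

noncomputable def cylinderInterval (p q : ℕ) {ℓ : ℕ} (β : Fin ℓ → Bool) : Set ℝ :=
  let c := rhoPartial p q (walkDigit p q fun k => if h : k < ℓ then β ⟨k, h⟩ else false) ℓ
  Icc (c - ((q : ℝ) / p) ^ ℓ * (p / (p - q))) (c + ((q : ℝ) / p) ^ ℓ * (p / (p - q)))

theorem rho_walkDigit_mem_cylinderInterval (hq : 0 < q) (hpq : q < p) (b : ℕ → Bool)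
    (ℓ : ℕ) : rho p q (walkDigit p q b) ∈ cylinderInterval p q fun i : Fin ℓ => b i := by
  have hprefix : rhoPartial p q (walkDigit p q b) ℓ =
      rhoPartial p q (walkDigit p q fun k => if h : k < ℓ then b k else false) ℓ :=
    Finset.sum_congr rfl fun i hi => by
      rw [walkDigit_congr (b' := fun k => if h : k < ℓ then b k else false) fun j hj => by
        simp [hj.trans_lt (Finset.mem_range.mp hi)]]
  rw [cylinderInterval, ← hprefix]
  exact rho_mem_Icc_rhoPartial hq hpq (abs_walkDigit_le hq hpq b) ℓ

theorem ediam_cylinderInterval {ℓ : ℕ} (β : Fin ℓ → Bool) :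
    Metric.ediam (cylinderInterval p q β) =
      ENNReal.ofReal (2 * (p / (p - q)) * ((q : ℝ) / p) ^ ℓ) := by
  rw [cylinderInterval, Real.ediam_Icc]
  ring_nf

theorem dimH_closure_range_rho_walkDigit_le (hq : 0 < q) (hpq : q < p) :
    dimH (closure (range fun b => rho p q (walkDigit p q b)))
      ≤ ENNReal.ofReal (Real.log 2 / (Real.log p - Real.log q)) := by
  have hq' : (0 : ℝ) < q := by exact_mod_cast hq
  have hqp : (q : ℝ) < p := by exact_mod_cast hpq
  have hp : (0 : ℝ) < p := hq'.trans hqp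
  have hlog : Real.log p - Real.log q = -Real.log ((q : ℝ) / p) := by
    rw [Real.log_div hq'.ne' hp.ne']
    ring
  rw [hlog]
  refine dimH_le_of_binary_covers (by positivity) ((div_lt_one hp).mpr hqp)
    (by have := sub_pos.mpr hqp; positivity) (fun ℓ β => cylinderInterval p q β)
    (fun ℓ β => (ediam_cylinderInterval β).le) fun ℓ => ?_
  refine closure_minimal ?_ (isClosed_iUnion_of_finite fun β => isClosed_Icc)
  rintro _ ⟨b, rfl⟩
  exact mem_iUnion.mpr ⟨_, rho_walkDigit_mem_cylinderInterval hq hpq b ℓ⟩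

theorem sub_rho_mem_range_rho_walkDigit (hq : 0 < q) (hpq : q < p) {n : ℕ} {w w' : ℕ → ℤ}
    (hw : IsBranch p q (LowAlph q) n w) (hw' : IsBranch p q (UpAlph p q) n w') :
    rho p q w' - rho p q w ∈ range fun b => rho p q (walkDigit p q b) := by
  obtain ⟨s, hs₀, hs⟩ := hw
  obtain ⟨s', hs'₀, hs'⟩ := hw'
  have hdigit : ∀ k, 0 ≤ w k ∧ w k ≤ (q : ℤ) - 1 := fun k => (hs k).2
  have hdigit' : ∀ k, (p : ℤ) - q ≤ w' k ∧ w' k ≤ (p : ℤ) - 1 := fun k => (hs' k).2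
  have habs : ∀ x : ℤ, 0 ≤ x → x ≤ p → |(x : ℝ)| ≤ p := fun x h₀ h₁ => by
    rw [abs_of_nonneg (by exact_mod_cast h₀)]
    exact_mod_cast h₁
  have hbound : ∀ k, |(w k : ℝ)| ≤ p := fun k =>
    habs _ (hdigit k).1 (by have := hdigit k; omega)
  have hbound' : ∀ k, |(w' k : ℝ)| ≤ p := fun k =>
    habs _ (by have := hdigit' k; omega) (by have := hdigit' k; omega)
  obtain ⟨b, hb⟩ := exists_walkDigit_eq (p := p) hq (t := fun k => (s' k : ℤ) - s k)
    (d := fun k => w' k - w k) (by simp [hs₀, hs'₀])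
    (fun k => by linear_combination (hs' k).1 - (hs k).1)
    (fun k => have := hdigit k; have := hdigit' k; ⟨by omega, by omega⟩)
  exact ⟨b, (congrArg (rho p q) hb).trans
    (rho_sub (summable_rho_of_abs_le hq hpq hbound') (summable_rho_of_abs_le hq hpq hbound))⟩

end

theorem stmt3_general (p q : ℕ) (hq : 1 < q) (hpq : q < p)
    (mw mx : ℕ → ℕ → ℤ)
    (hmw : ∀ n, IsBranch p q (LowAlph q) n (mw n))
    (hmx : ∀ n, IsBranch p q (UpAlph p q) n (mx n)) :
    dimH (closure {x : ℝ | ∃ n : ℕ, x = rho p q (mx n) - rho p q (mw n)})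
      ≤ ENNReal.ofReal (Real.log 2 / (Real.log p - Real.log q)) := by
  have hspans : {x : ℝ | ∃ n : ℕ, x = rho p q (mx n) - rho p q (mw n)} ⊆
      range fun b => rho p q (walkDigit p q b) := by
    rintro _ ⟨n, rfl⟩
    exact sub_rho_mem_range_rho_walkDigit (by omega) hpq (hmw n) (hmx n)
  exact (dimH_mono (closure_mono hspans)).trans
    (dimH_closure_range_rho_walkDigit_le (by omega) hpq)

theorem stmt3 (p q : ℕ) (hco : Nat.Coprime p q) (hq : 1 < q) (hpq : q < p)
    (hbig : 2 * q - 1 < p)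
    (mw mx : ℕ → ℕ → ℤ)
    (hmw : ∀ n, IsBranch p q (LowAlph q) n (mw n))
    (hmx : ∀ n, IsBranch p q (UpAlph p q) n (mx n)) :
    dimH (closure {x : ℝ | ∃ n : ℕ, x = rho p q (mx n) - rho p q (mw n)})
      ≤ ENNReal.ofReal (Real.log 2 / (Real.log p - Real.log q)) :=
  stmt3_general p q hq hpq mw mx hmw hmx
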